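/- Let d ≥ 1 be an integer and γ ∈ (1/2,(d+2)/4). The following are equivalent: (i) γ = (d+3)/6; (ii) for every ξ ∈ ℝ^d \ {0} and every bounded continuous k : (0,∞) → ℝ, ∫_{ℝ^d} k(|η|/|ξ|) H(η|ξ) dη = ∫_{ℝ^d} k(|ξ|/|η|) H(η|ξ) dη. That is, the ratio R = |η|/|ξ| under the law H(·|ξ) is symmetrically distributed on the multiplicative group (0,∞) (has the same distribution as 1/R) if and only if γ = (d+3)/6. -/

import Mathlib

/-!
Inversion in the sphere of radius `‖ξ‖` about the origin fixes `ξ`, exchanges `‖η‖/‖ξ‖` with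
`‖ξ‖/‖η‖`, and has Jacobian `(‖ξ‖/‖η‖)^(2d)`; together with the scaling of `‖η‖` and `‖ξ - η‖` it
turns `H(η|ξ) dη` into `(‖ξ‖/‖η‖)^(6γ-d-3) H(η|ξ) dη`. So the two integrals agree for every `k`
when `6γ = d + 3`. Otherwise, for a bump `k ≥ 0` supported in `(4/3, 2)`, the difference of the
two integrands is `k (t^(6γ-d-3) - 1) H` with `t = ‖ξ‖/‖η‖ > 1`, which has the strict sign of
`6γ-d-3` on an open set, because `c_{d,γ} > 0`.
-/

open MeasureTheory Set

/-- The constant `c_{d,γ}` of the standard majorizing kernel. -/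
noncomputable def cdg (d : ℕ) (γ : ℝ) : ℝ :=
  Real.pi ^ (-(d : ℝ)/2) * Real.Gamma (2*γ - 1) * (Real.Gamma (((d : ℝ) + 1 - 2*γ)/2))^2 /
    (Real.Gamma (((d : ℝ) + 2 - 4*γ)/2) * (Real.Gamma ((2*γ - 1)/2))^2)

/-- `H(η|ξ) = c_{d,γ} |η|^{2γ−d−1} |ξ−η|^{2γ−d−1} |ξ|^{d+2−4γ}`. -/
noncomputable def Hker (d : ℕ) (γ : ℝ) (η ξ : EuclideanSpace ℝ (Fin d)) : ℝ :=
  cdg d γ * ‖η‖ ^ (2*γ - (d : ℝ) - 1) * ‖ξ - η‖ ^ (2*γ - (d : ℝ) - 1)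
    * ‖ξ‖ ^ ((d : ℝ) + 2 - 4*γ)

open EuclideanGeometry Metric Function Module

theorem integral_pos_of_ne_zero_on_isOpen {X : Type*} [TopologicalSpace X] [MeasurableSpace X]
    {μ : Measure X} [μ.IsOpenPosMeasure] {f : X → ℝ} (hf : 0 ≤ f) (hfi : Integrable f μ)
    {S : Set X} (hS : IsOpen S) (hS_nonempty : S.Nonempty) (hfS : ∀ x ∈ S, f x ≠ 0) :
    0 < ∫ x, f x ∂μ :=
  (integral_pos_iff_support_of_nonneg hf hfi).mpr
    ((hS.measure_pos μ hS_nonempty).trans_le (measure_mono hfS))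

theorem mul_rpow_sub_one_pos {t p : ℝ} (ht : 1 < t) (hp : p ≠ 0) : 0 < p * (t ^ p - 1) := by
  rcases hp.lt_or_gt with hp | hp
  · exact mul_pos_of_neg_of_neg hp (sub_neg.mpr (Real.rpow_lt_one_of_one_lt_of_neg ht hp))
  · exact mul_pos hp (sub_pos.mpr (Real.one_lt_rpow ht hp))

theorem isOpen_setOf_ne_zero_comp_norm_div {F : Type*} [NormedAddCommGroup F] {k : ℝ → ℝ}
    (hk : Continuous k) (r : ℝ) : IsOpen {x : F | x ≠ 0 ∧ k (r / ‖x‖) ≠ 0} :=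
  (hk.comp_continuousOn (continuousOn_const.div continuous_norm.continuousOn
    fun _ hx => norm_ne_zero_iff.mpr hx)).isOpen_inter_preimage isOpen_compl_singleton
    isOpen_compl_singleton

section Inversion

variable {F : Type*} [NormedAddCommGroup F] [InnerProductSpace ℝ F]

theorem norm_inversion_zero (R : ℝ) (x : F) : ‖inversion 0 R x‖ = R ^ 2 / ‖x‖ := by
  simpa only [dist_zero_right] using dist_inversion_center (0 : F) x R

theorem norm_sub_inversion_zero {ξ x : F} (hξ : ξ ≠ 0) (hx : x ≠ 0) :
    ‖ξ - inversion 0 ‖ξ‖ x‖ = ‖ξ‖ / ‖x‖ * ‖ξ - x‖ := by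
  have hξ₀ : 0 < ‖ξ‖ := norm_pos_iff.mpr hξ
  have hdist := dist_inversion_inversion hξ hx ‖ξ‖
  rw [inversion_of_mem_sphere (by simp)] at hdist
  rw [← dist_eq_norm, hdist, dist_zero_right, dist_zero_right, dist_eq_norm]
  field_simp

variable [FiniteDimensional ℝ F]

theorem abs_det_smul_reflection (a : ℝ) (K : Submodule ℝ F) [K.HasOrthogonalProjection] :
    |(a • (K.reflection : F →L[ℝ] F)).det| = |a| ^ finrank ℝ F := by
  have : ((K.reflection : F →L[ℝ] F) : F →ₗ[ℝ] F) = K.reflection.toLinearEquiv := rfl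
  rw [ContinuousLinearMap.det, ContinuousLinearMap.toLinearMap_smul, LinearMap.det_smul, this,
    K.det_reflection, abs_mul, abs_pow, abs_pow, abs_neg, abs_one, one_pow, mul_one]

variable [MeasurableSpace F] [BorelSpace F]

theorem integral_comp_inversion {G : Type*} [NormedAddCommGroup G] [NormedSpace ℝ G]
    [Nontrivial F] (μ : Measure F) [μ.IsAddHaarMeasure] (c : F) {R : ℝ} (hR : R ≠ 0)
    (g : F → G) :
    ∫ x, (R / dist x c) ^ (2 * finrank ℝ F) • g (inversion c R x) ∂μ = ∫ x, g x ∂μ := by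
  have hrestrict : μ.restrict {c}ᶜ = μ :=
    Measure.restrict_eq_self_of_ae_mem (compl_mem_ae_iff.mpr (measure_singleton c))
  have hmaps : MapsTo (inversion c R) {c}ᶜ {c}ᶜ := fun x hx => (inversion_eq_center hR).not.mpr hx
  have hinv : Involutive (inversion c R) := inversion_inversion c hR
  have himage : inversion c R '' {c}ᶜ = {c}ᶜ :=
    hmaps.image_subset.antisymm fun y hy => ⟨inversion c R y, hmaps hy, hinv y⟩
  have := integral_image_eq_integral_abs_det_fderiv_smul μ (measurableSet_singleton c).compl
    (fun x hx => (hasFDerivAt_inversion (R := R) hx).hasFDerivWithinAt) hinv.injective.injOn g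
  rw [himage, hrestrict] at this
  simp only [this, abs_det_smul_reflection, abs_sq, ← pow_mul]

end Inversion

variable {d : ℕ} {γ : ℝ}

local notation "E" => EuclideanSpace ℝ (Fin d)

theorem cdg_pos (hγ : γ ∈ Ioo (1/2 : ℝ) (((d : ℝ) + 2)/4)) : 0 < cdg d γ := by
  obtain ⟨h₁, h₂⟩ := hγ
  have := Real.pi_pos
  have := Real.Gamma_pos_of_pos (by linarith : 0 < 2 * γ - 1)
  have := Real.Gamma_pos_of_pos (by linarith : 0 < (2 * γ - 1) / 2)
  have := Real.Gamma_pos_of_pos (by linarith : 0 < ((d : ℝ) + 1 - 2 * γ) / 2)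
  have := Real.Gamma_pos_of_pos (by linarith : 0 < ((d : ℝ) + 2 - 4 * γ) / 2)
  unfold cdg
  positivity

theorem Hker_pos (hc : 0 < cdg d γ) {η ξ : E} (hη : 0 < ‖η‖) (hηξ : ‖η‖ < ‖ξ‖) :
    0 < Hker d γ η ξ := by
  have : 0 < ‖ξ - η‖ := by linarith [norm_sub_norm_le ξ η]
  have : 0 < ‖ξ‖ := hη.trans hηξ
  unfold Hker
  positivity

theorem continuousOn_Hker (ξ : E) :
    ContinuousOn (fun η => Hker d γ η ξ) {η | η ≠ 0 ∧ η ≠ ξ} := by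
  rintro η ⟨hη, hηξ⟩
  have h₁ : ‖η‖ ≠ 0 := norm_ne_zero_iff.mpr hη
  have h₂ : ‖ξ - η‖ ≠ 0 := norm_ne_zero_iff.mpr (sub_ne_zero.mpr hηξ.symm)
  apply ContinuousAt.continuousWithinAt
  unfold Hker
  fun_prop (disch := exact Or.inl ‹_›)

theorem Hker_inversion {ξ x : E} (hξ : ξ ≠ 0) (hx : x ≠ 0) :
    (‖ξ‖ / ‖x‖) ^ (2 * d) * Hker d γ (inversion 0 ‖ξ‖ x) ξ
      = (‖ξ‖ / ‖x‖) ^ (6 * γ - d - 3) * Hker d γ x ξ := by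
  have hx₀ : 0 < ‖x‖ := norm_pos_iff.mpr hx
  set t := ‖ξ‖ / ‖x‖ with ht
  have ht₀ : 0 < t := div_pos (norm_pos_iff.mpr hξ) hx₀
  have hinv : ‖inversion (0 : E) ‖ξ‖ x‖ = t * (t * ‖x‖) := by
    rw [norm_inversion_zero, ht]; field_simp
  set p := 2 * γ - (d : ℝ) - 1
  have hexp : t ^ (2 * d) * (t ^ p * (t ^ p * t ^ p)) = t ^ (6 * γ - d - 3) := by
    rw [← Real.rpow_natCast, ← Real.rpow_add ht₀, ← Real.rpow_add ht₀, ← Real.rpow_add ht₀]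
    congr 1
    push_cast
    ring
  rw [Hker, Hker, hinv, norm_sub_inversion_zero hξ hx, ← ht,
    Real.mul_rpow ht₀.le (by positivity), Real.mul_rpow ht₀.le hx₀.le,
    Real.mul_rpow ht₀.le (norm_nonneg _), ← hexp]
  ring

theorem integral_comp_norm_div_mul_Hker {ξ : E} (hξ : ξ ≠ 0) (k : ℝ → ℝ) :
    ∫ η, k (‖η‖ / ‖ξ‖) * Hker d γ η ξ
      = ∫ η, k (‖ξ‖ / ‖η‖) * ((‖ξ‖ / ‖η‖) ^ (6 * γ - d - 3) * Hker d γ η ξ) := by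
  have : Nontrivial E := nontrivial_of_ne ξ 0 hξ
  have hξ₀ : 0 < ‖ξ‖ := norm_pos_iff.mpr hξ
  rw [← integral_comp_inversion volume (0 : E) hξ₀.ne']
  refine integral_congr_ae ?_
  filter_upwards [compl_mem_ae_iff.mpr (measure_singleton (0 : E))] with x (hx : x ≠ 0)
  have hratio : ‖inversion 0 ‖ξ‖ x‖ / ‖ξ‖ = ‖ξ‖ / ‖x‖ := by
    rw [norm_inversion_zero]; field_simp
  rw [smul_eq_mul, dist_zero_right, finrank_euclideanSpace_fin, hratio, ← Hker_inversion hξ hx]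
  ring

theorem norm_mem_Icc_div_iff {ξ : E} (hξ : ξ ≠ 0) {a b : ℝ} (ha : 0 < a) (hab : a ≤ b) (η : E) :
    ‖η‖ ∈ Icc (‖ξ‖ / b) (‖ξ‖ / a) ↔ ‖ξ‖ / ‖η‖ ∈ Icc a b := by
  have hξ₀ : 0 < ‖ξ‖ := norm_pos_iff.mpr hξ
  rcases (norm_nonneg η).eq_or_lt with h | h
  · simp only [← h, div_zero, mem_Icc, not_le.mpr ha, false_and, iff_false]
    exact fun h' => (div_pos hξ₀ (ha.trans_le hab)).not_ge h'.1
  · simp only [mem_Icc, div_le_iff₀ (ha.trans_le hab), le_div_iff₀ ha, le_div_iff₀ h,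
      div_le_iff₀ h]
    constructor <;> rintro ⟨h₁, h₂⟩ <;> constructor <;> linarith

theorem integrable_comp_norm_div_mul_Hker {ξ : E} (hξ : ξ ≠ 0) {k : ℝ → ℝ} {a b : ℝ}
    (ha : 1 < a) (hab : a ≤ b) (hk : ContinuousOn k (Icc a b)) (hsupp : support k ⊆ Icc a b) :
    Integrable (fun η => k (‖ξ‖ / ‖η‖) * Hker d γ η ξ) := by
  have hξ₀ : 0 < ‖ξ‖ := norm_pos_iff.mpr hξ
  set K : Set E := (‖·‖) ⁻¹' Icc (‖ξ‖ / b) (‖ξ‖ / a)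
  have hK : IsCompact K :=
    isCompact_of_isClosed_isBounded (isClosed_Icc.preimage continuous_norm)
      (isBounded_closedBall (x := 0) (r := ‖ξ‖ / a) |>.subset fun η hη => by
        simpa using hη.2)
  have hmaps : MapsTo (fun η : E => ‖ξ‖ / ‖η‖) K (Icc a b) := fun η hη =>
    (norm_mem_Icc_div_iff hξ (by linarith) hab η).mp hη
  have hK₀ : K ⊆ {η | η ≠ 0 ∧ η ≠ ξ} := by
    intro η hη
    have h₁ : 0 < ‖η‖ := (div_pos hξ₀ (by linarith)).trans_le hη.1
    have h₂ : ‖η‖ < ‖ξ‖ := hη.2.trans_lt (div_lt_self hξ₀ ha)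
    exact ⟨norm_pos_iff.mp h₁, fun h => by simp [h] at h₂⟩
  refine (integrableOn_iff_integrable_of_support_subset (s := K) ?_).mp ?_
  · intro η hη
    exact (norm_mem_Icc_div_iff hξ (by linarith) hab η).mpr (hsupp (left_ne_zero_of_mul hη))
  · refine ContinuousOn.integrableOn_compact hK
      (ContinuousOn.mul ?_ ((continuousOn_Hker ξ).mono hK₀))
    refine hk.comp (continuousOn_const.div continuous_norm.continuousOn fun η hη => ?_) hmaps
    exact norm_ne_zero_iff.mpr (hK₀ hη).1

theorem mul_rpow_sub_one_mul_Hker_pos (hc : 0 < cdg d γ) {p : ℝ} (hp : p ≠ 0) {ξ η : E}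
    (ht : 1 < ‖ξ‖ / ‖η‖) : 0 < p * ((‖ξ‖ / ‖η‖) ^ p - 1) * Hker d γ η ξ := by
  obtain ⟨hη, hηξ⟩ | ⟨hη, -⟩ := one_lt_div_iff.mp ht
  · exact mul_pos (mul_rpow_sub_one_pos ht hp) (Hker_pos hc hη hηξ)
  · exact absurd hη (norm_nonneg η).not_gt

theorem exponent_eq_zero_of_forall_integral_eq (hc : 0 < cdg d γ) {ξ : E} (hξ : ξ ≠ 0)
    (hsym : ∀ k : ℝ → ℝ, Continuous k → (∃ C : ℝ, ∀ x, |k x| ≤ C) →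
      ∫ η, k (‖η‖ / ‖ξ‖) * Hker d γ η ξ = ∫ η, k (‖ξ‖ / ‖η‖) * Hker d γ η ξ) :
    6 * γ - d - 3 = 0 := by
  by_contra hp
  set p := 6 * γ - (d : ℝ) - 3
  set t : E → ℝ := fun η => ‖ξ‖ / ‖η‖
  let k : ContDiffBump (5 / 3 : ℝ) := ⟨1 / 6, 1 / 3, by norm_num, by norm_num⟩
  have hk_supp : support k = Ioo (4 / 3) 2 := by
    rw [k.support_eq, Real.ball_eq_Ioo]; norm_num
  have hk_Icc : support k ⊆ Icc (4 / 3) 2 := hk_supp ▸ Ioo_subset_Icc_self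
  have hF : Integrable fun η => k (t η) * Hker d γ η ξ :=
    integrable_comp_norm_div_mul_Hker hξ (by norm_num) (by norm_num) k.continuous.continuousOn
      hk_Icc
  have hG : Integrable fun η => k (t η) * (t η ^ p * Hker d γ η ξ) := by
    simp only [← mul_assoc]
    refine integrable_comp_norm_div_mul_Hker (k := fun s => k s * s ^ p) hξ (by norm_num)
      (by norm_num) ?_ ((support_mul_subset_left _ _).trans hk_Icc)
    exact k.continuous.continuousOn.mul (continuousOn_id.rpow_const fun s hs =>
      Or.inl ((by norm_num : (0 : ℝ) < 4 / 3).trans_le hs.1).ne')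
  have heq : ∫ η, k (t η) * (t η ^ p * Hker d γ η ξ) = ∫ η, k (t η) * Hker d γ η ξ :=
    (integral_comp_norm_div_mul_Hker hξ k).symm.trans
      (hsym k k.continuous ⟨1, fun x => (abs_of_nonneg k.nonneg).trans_le k.le_one⟩)
  set D := fun η => p * (k (t η) * (t η ^ p * Hker d γ η ξ) - k (t η) * Hker d γ η ξ)
  have hD_pos : ∀ η, k (t η) ≠ 0 → 0 < D η := fun η hη => by
    have ht : 1 < t η := by linarith [(hk_supp ▸ mem_support.mpr hη : t η ∈ Ioo (4 / 3) 2).1]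
    rw [show D η = k (t η) * (p * (t η ^ p - 1) * Hker d γ η ξ) by ring]
    exact mul_pos (k.nonneg.lt_of_ne' hη) (mul_rpow_sub_one_mul_Hker_pos hc hp ht)
  have hD_nonneg : 0 ≤ D := fun η => by
    by_cases hη : k (t η) = 0
    · simp [D, hη]
    · exact (hD_pos η hη).le
  have hk_center : k (t ((3 / 5 : ℝ) • ξ)) ≠ 0 := by
    have : t ((3 / 5 : ℝ) • ξ) = 5 / 3 := by
      simp only [t, norm_smul, Real.norm_eq_abs]
      field_simp
      norm_num
    rw [this, k.one_of_mem_closedBall (mem_closedBall_self (by norm_num))]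
    exact one_ne_zero
  have hpos : 0 < ∫ η, D η :=
    integral_pos_of_ne_zero_on_isOpen hD_nonneg ((hG.sub hF).const_mul p)
      (isOpen_setOf_ne_zero_comp_norm_div k.continuous ‖ξ‖)
      ⟨_, smul_ne_zero (by norm_num) hξ, hk_center⟩ fun η hη => (hD_pos η hη.2).ne'
  rw [integral_const_mul, integral_sub hG hF, heq, sub_self, mul_zero] at hpos
  exact hpos.false

theorem stmt5 (d : ℕ) (hd : 1 ≤ d) (γ : ℝ)
    (hγ : γ ∈ Set.Ioo (1/2 : ℝ) (((d : ℝ) + 2)/4)) :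
    γ = ((d : ℝ) + 3)/6 ↔
      ∀ ξ : EuclideanSpace ℝ (Fin d), ξ ≠ 0 →
        ∀ k : ℝ → ℝ, Continuous k → (∃ C : ℝ, ∀ x, |k x| ≤ C) →
          ∫ η, k (‖η‖ / ‖ξ‖) * Hker d γ η ξ = ∫ η, k (‖ξ‖ / ‖η‖) * Hker d γ η ξ := by
  constructor
  · rintro rfl ξ hξ k - -
    have hp : 6 * (((d : ℝ) + 3) / 6) - d - 3 = 0 := by ring
    simp only [integral_comp_norm_div_mul_Hker hξ k, hp, Real.rpow_zero, one_mul]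
  · intro hsym
    have : NeZero d := ⟨by omega⟩
    obtain ⟨ξ, hξ⟩ := exists_ne (0 : EuclideanSpace ℝ (Fin d))
    linarith [exponent_eq_zero_of_forall_integral_eq (cdg_pos hγ) hξ (hsym ξ hξ)]
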